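/- Let K be a real 2×2 matrix with det K = 1, let y ∈ ℝ, and let O(y) = [[cos y, sin y],[-sin y, cos y]]. With C = (K₁₁ + K₂₂)/2 and S = (K₁₂ - K₂₁)/2, the spectral (operator 2-) norm of K - O(y) equals √((C - cos y)² + (S - sin y)²) + √(C² + S² - 1). -/

import Mathlib

/-!
Identify `ℝ²` with `ℂ`. Every real-linear map of `ℂ` is uniquely `z ↦ α z + β z̄`, with
`α` the conformal and `β` the anticonformal part, and its operator norm is `‖α‖ + ‖β‖`: the
triangle inequality gives `≤`, and equality holds at the unit vector rotating `α z` and `β z̄`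
onto a common direction. For `K - O(y)` one finds `‖α‖² = (C - cos y)² + (S - sin y)²` and
`‖β‖² = C² + S² - det K`.
-/

open Matrix

/-- The spectral norm of a real 2×2 matrix, i.e. the operator norm of the induced map
on the Euclidean space `ℝ²`. -/
noncomputable def specNorm2 (M : Matrix (Fin 2) (Fin 2) ℝ) : ℝ :=
  ‖(Matrix.toEuclideanCLM (𝕜 := ℝ) M : EuclideanSpace ℝ (Fin 2) →L[ℝ] EuclideanSpace ℝ (Fin 2))‖

open Complex ComplexConjugate

theorem mul_exp_ofReal_mul_I_eq_norm_mul (α : ℂ) (θ : ℝ) :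
    α * exp (θ * I) = ‖α‖ * exp ((arg α + θ : ℝ) * I) := by
  conv_lhs => rw [← norm_mul_exp_arg_mul_I α]
  rw [mul_assoc, ← exp_add]
  push_cast
  ring_nf

theorem opNorm_eq_norm_add_norm_of_apply_eq_mul_add_mul_conj (f : ℂ →L[ℝ] ℂ) (α β : ℂ)
    (hf : ∀ z, f z = α * z + β * conj z) : ‖f‖ = ‖α‖ + ‖β‖ := by
  refine le_antisymm (f.opNorm_le_bound (by positivity) fun z => ?_) ?_
  · calc ‖f z‖ ≤ ‖α * z‖ + ‖β * conj z‖ := hf z ▸ norm_add_le _ _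
      _ = (‖α‖ + ‖β‖) * ‖z‖ := by simp only [norm_mul, RCLike.norm_conj]; ring
  · set θ := (arg β - arg α) / 2
    have hconj : conj (exp (θ * I)) = exp ((-θ : ℝ) * I) := by
      rw [← exp_conj, map_mul, conj_ofReal, conj_I]
      push_cast
      ring_nf
    have hrot : f (exp (θ * I)) = ((‖α‖ + ‖β‖ : ℝ) : ℂ) * exp ((arg α + θ : ℝ) * I) := by
      rw [hf, hconj, mul_exp_ofReal_mul_I_eq_norm_mul α θ, mul_exp_ofReal_mul_I_eq_norm_mul β (-θ),
        show arg β + -θ = arg α + θ by simp only [θ]; ring]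
      push_cast
      ring
    simpa only [hrot, norm_mul, norm_exp_ofReal_mul_I, norm_real, mul_one,
      Real.norm_of_nonneg (by positivity : 0 ≤ ‖α‖ + ‖β‖)] using f.le_opNorm (exp (θ * I))

theorem specNorm2_eq_sqrt_add_sqrt (M : Matrix (Fin 2) (Fin 2) ℝ) :
    specNorm2 M = √(((M 0 0 + M 1 1) / 2) ^ 2 + ((M 1 0 - M 0 1) / 2) ^ 2) +
      √(((M 0 0 - M 1 1) / 2) ^ 2 + ((M 1 0 + M 0 1) / 2) ^ 2) := by
  let e := orthonormalBasisOneI.repr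
  let f : ℂ →L[ℝ] ℂ := (e.symm : EuclideanSpace ℝ (Fin 2) →L[ℝ] ℂ).comp
    ((toEuclideanCLM (𝕜 := ℝ) M).comp (e : ℂ →L[ℝ] EuclideanSpace ℝ (Fin 2)))
  have hf : ∀ z, f z = ⟨(M 0 0 + M 1 1) / 2, (M 1 0 - M 0 1) / 2⟩ * z +
      ⟨(M 0 0 - M 1 1) / 2, (M 1 0 + M 0 1) / 2⟩ * conj z := by
    intro z
    apply Complex.ext <;>
      simp only [f, e, ContinuousLinearMap.comp_apply, ContinuousLinearEquiv.coe_coe,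
        LinearIsometryEquiv.toContinuousLinearEquiv_symm,
        LinearIsometryEquiv.coe_toContinuousLinearEquiv,
        LinearIsometryEquiv.coe_symm_toContinuousLinearEquiv, orthonormalBasisOneI_repr_apply,
        orthonormalBasisOneI_repr_symm_apply, ofLp_toEuclideanCLM, mulVec, dotProduct,
        Fin.sum_univ_two, cons_val_zero, cons_val_one, cons_val_fin_one, ofReal_add, ofReal_mul,
        add_re, add_im, mul_re, mul_im, ofReal_re, ofReal_im, I_re, I_im, conj_re, conj_im] <;>
      ring
  have hnorm : specNorm2 M = ‖f‖ := by
    simp only [specNorm2, f, ContinuousLinearMap.opNorm_linearIsometryEquiv_comp,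
      ContinuousLinearMap.opNorm_comp_linearIsometryEquiv]
  rw [hnorm, opNorm_eq_norm_add_norm_of_apply_eq_mul_add_mul_conj f _ _ hf, norm_def, norm_def,
    normSq_mk, normSq_mk, sq, sq, sq, sq]

/-- Explicit formula for the spectral norm of `K - O(y)` when `det K = 1`. -/
theorem norm_K_sub_rotation (K : Matrix (Fin 2) (Fin 2) ℝ) (hdet : K.det = 1) (y : ℝ) :
    let O : Matrix (Fin 2) (Fin 2) ℝ := !![Real.cos y, Real.sin y; -Real.sin y, Real.cos y]
    let C := (K 0 0 + K 1 1) / 2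
    let S := (K 0 1 - K 1 0) / 2
    specNorm2 (K - O) =
      Real.sqrt ((C - Real.cos y) ^ 2 + (S - Real.sin y) ^ 2) +
        Real.sqrt (C ^ 2 + S ^ 2 - 1) := by
  intro O C S
  rw [det_fin_two] at hdet
  rw [specNorm2_eq_sqrt_add_sqrt]
  simp only [O, C, S, Matrix.sub_apply, of_apply, cons_val', cons_val_zero, cons_val_one,
    empty_val', cons_val_fin_one]
  congr 2
  · ring
  · linear_combination -hdet
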